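/- Let A ∈ ℝ^{m×n}, B ∈ ℝ^{m×ℓ} and S ∈ ℝ^{r×m} be such that rank(SA) = rank(A), rank(SB) = rank(B), and all singular values of S U_A and of S U_B lie in [√(1−ε), √(1+ε)] for some 0 < ε < 1/2. Then for every i ≤ min(n,ℓ): |σ_i(U_A^T S^T S U_B) − σ_i(U_{SA}^T U_{SB})| ≤ 2ε(1+ε). -/

import Mathlib

/-!
Because `range (S U_A) = range (S A) = range U_{SA}`, the matrix `S U_A` factors as `U_{SA} R_A`
with `R_A = U_{SA}ᵀ S U_A` square and `‖R_A x‖ = ‖S U_A x‖`; so the squared singular values of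
`R_A`, and by Cauchy–Schwarz those of `R_Aᵀ`, lie in `[1 - ε, 1 + ε]`. The same holds for `B`, and
`U_Aᵀ Sᵀ S U_B = R_Aᵀ M R_B` with `M = U_{SA}ᵀ U_{SB}`. By the Courant–Fischer min–max
principle, multiplying `M` on the left by `R_Aᵀ` and on the right by `R_B` changes each `σ_i(M)`
by a factor in `[1 - ε, 1 + ε]`. Since `σ_i(M) ≤ 1`, the two singular values differ by at most `ε`.
-/

open Matrix

theorem Matrix.isHermitian_transpose_mul_self {m n α : Type*} [CommSemiring α] [StarRing α]
    [TrivialStar α] [Fintype m] (A : Matrix m n α) : (Aᵀ * A).IsHermitian := by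
  rw [← conjTranspose_eq_transpose_of_trivial]
  exact isHermitian_conjTranspose_mul_self A

noncomputable def svals {p q : ℕ} (X : Matrix (Fin p) (Fin q) ℝ) : Fin q → ℝ :=
  fun i => Real.sqrt ((Matrix.isHermitian_transpose_mul_self X).eigenvalues
    (Tuple.sort ((Matrix.isHermitian_transpose_mul_self X).eigenvalues) i.rev))

noncomputable def sNorm {p q : ℕ} (X : Matrix (Fin p) (Fin q) ℝ) : ℝ :=
  ⨆ i, svals X i

open Module Submodule

lemma Submodule.exists_mem_inf_ne_zero_of_finrank_lt_add {K V : Type*} [DivisionRing K]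
    [AddCommGroup V] [Module K V] [FiniteDimensional K V] {U W : Submodule K V}
    (h : finrank K V < finrank K U + finrank K W) : ∃ x ∈ U ⊓ W, x ≠ 0 := by
  have hsum := Submodule.finrank_sup_add_finrank_inf_eq U W
  have hsup := (U ⊔ W).finrank_le
  obtain ⟨⟨x, hx⟩, hx0⟩ :=
    finrank_pos_iff_exists_ne_zero.mp (show 0 < finrank K ↥(U ⊓ W) by omega)
  exact ⟨x, hx, by simpa using hx0⟩

namespace Matrix

section DotProduct

variable {R : Type*} [CommRing R] {m n : Type*} [Fintype m] [Fintype n]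

lemma mulVec_dotProduct_mulVec_self (X : Matrix m n R) (x : n → R) :
    (X *ᵥ x) ⬝ᵥ (X *ᵥ x) = x ⬝ᵥ ((Xᵀ * X) *ᵥ x) := by
  rw [← mulVec_mulVec, dotProduct_mulVec x, vecMul_transpose]

variable [LinearOrder R] [IsStrictOrderedRing R]

lemma dotProduct_self_nonneg (x : n → R) : 0 ≤ x ⬝ᵥ x :=
  Finset.sum_nonneg fun i _ => mul_self_nonneg (x i)

lemma dotProduct_self_pos {x : n → R} (hx : x ≠ 0) : 0 < x ⬝ᵥ x :=
  (dotProduct_self_nonneg x).lt_of_ne fun h => hx (dotProduct_self_eq_zero.mp h.symm)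

lemma dotProduct_sq_le (u v : n → R) : (u ⬝ᵥ v) ^ 2 ≤ (u ⬝ᵥ u) * (v ⬝ᵥ v) := by
  simpa [dotProduct, sq] using Finset.sum_mul_sq_le_sq_mul_sq Finset.univ u v

end DotProduct

section GramBounds

variable {m n : Type*} [Fintype m] [Fintype n]

/-- The squared singular values of `X` lie in `[α, β]`. -/
def GramBounds (α β : ℝ) (X : Matrix m n ℝ) : Prop :=
  ∀ x, α * (x ⬝ᵥ x) ≤ (X *ᵥ x) ⬝ᵥ (X *ᵥ x) ∧ (X *ᵥ x) ⬝ᵥ (X *ᵥ x) ≤ β * (x ⬝ᵥ x)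

variable {α β : ℝ}

lemma GramBounds.injective {X : Matrix m n ℝ} (hX : GramBounds α β X) (hα : 0 < α) :
    Function.Injective X.mulVecLin := by
  rw [← LinearMap.ker_eq_bot, LinearMap.ker_eq_bot']
  intro x hx
  by_contra hx0
  have := (hX x).1
  rw [show X *ᵥ x = 0 from hx, dotProduct_zero] at this
  exact this.not_gt (mul_pos hα (dotProduct_self_pos hx0))

lemma transpose_mulVec_dotProduct_self_le {X : Matrix m n ℝ} (hβ : 0 ≤ β)
    (hX : ∀ x, (X *ᵥ x) ⬝ᵥ (X *ᵥ x) ≤ β * (x ⬝ᵥ x)) (z : m → ℝ) :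
    (Xᵀ *ᵥ z) ⬝ᵥ (Xᵀ *ᵥ z) ≤ β * (z ⬝ᵥ z) := by
  set w := Xᵀ *ᵥ z
  have hw : z ⬝ᵥ (X *ᵥ w) = w ⬝ᵥ w := by rw [dotProduct_mulVec, ← mulVec_transpose]
  have : (w ⬝ᵥ w) ^ 2 ≤ (β * (z ⬝ᵥ z)) * (w ⬝ᵥ w) :=
    calc (w ⬝ᵥ w) ^ 2 ≤ (z ⬝ᵥ z) * ((X *ᵥ w) ⬝ᵥ (X *ᵥ w)) :=
          hw ▸ dotProduct_sq_le z (X *ᵥ w)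
      _ ≤ (z ⬝ᵥ z) * (β * (w ⬝ᵥ w)) := by gcongr; exacts [dotProduct_self_nonneg z, hX w]
      _ = (β * (z ⬝ᵥ z)) * (w ⬝ᵥ w) := by ring
  nlinarith [dotProduct_self_nonneg w, mul_nonneg hβ (dotProduct_self_nonneg z)]

lemma GramBounds.transpose {X : Matrix n n ℝ} (hX : GramBounds α β X) (hα : 0 < α)
    (hβ : 0 ≤ β) : GramBounds α β Xᵀ := by
  intro z
  refine ⟨?_, transpose_mulVec_dotProduct_self_le hβ (fun x => (hX x).2) z⟩
  -- `X` is onto; writing `z = X u`, Cauchy–Schwarz gives `‖z‖² = ⟪Xᵀ z, u⟫ ≤ ‖Xᵀ z‖ ‖u‖`.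
  obtain ⟨u, rfl⟩ := LinearMap.injective_iff_surjective.mp (hX.injective hα) z
  rw [mulVecLin_apply]
  set z := X *ᵥ u
  set w := Xᵀ *ᵥ z
  have hz : z ⬝ᵥ (X *ᵥ u) = w ⬝ᵥ u := by rw [dotProduct_mulVec, ← mulVec_transpose]
  have : (α * (z ⬝ᵥ z)) ^ 2 ≤ (w ⬝ᵥ w) * (α * (z ⬝ᵥ z)) :=
    calc (α * (z ⬝ᵥ z)) ^ 2 = α * (α * (w ⬝ᵥ u) ^ 2) := by rw [← hz]; ring
      _ ≤ α * (α * ((w ⬝ᵥ w) * (u ⬝ᵥ u))) := by gcongr; exact dotProduct_sq_le w u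
      _ = (w ⬝ᵥ w) * (α * (α * (u ⬝ᵥ u))) := by ring
      _ ≤ (w ⬝ᵥ w) * (α * (z ⬝ᵥ z)) := by
        gcongr; exacts [dotProduct_self_nonneg w, (hX u).1]
  nlinarith [dotProduct_self_nonneg w, mul_nonneg hα.le (dotProduct_self_nonneg z)]

lemma GramBounds.le [Nonempty n] {R : Matrix n n ℝ} (hR : GramBounds α β R) : α ≤ β := by
  classical
  obtain ⟨j⟩ := ‹Nonempty n›
  simpa using (hR (Pi.single j 1)).1.trans (hR (Pi.single j 1)).2

lemma GramBounds.finrank_comap {R : Matrix n n ℝ} (hR : GramBounds α β R) (hα : 0 < α)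
    (U : Submodule ℝ (n → ℝ)) : finrank ℝ (U.comap R.mulVecLin) = finrank ℝ U := by
  let e := LinearEquiv.ofBijective R.mulVecLin
    ⟨hR.injective hα, LinearMap.injective_iff_surjective.mp (hR.injective hα)⟩
  change finrank ℝ (U.comap (e : (n → ℝ) →ₗ[ℝ] n → ℝ)) = _
  rw [comap_equiv_eq_map_symm, LinearEquiv.finrank_map_eq]

end GramBounds

section OrthonormalColumns

variable {m n k : Type*} [Fintype m] [Fintype n] [Fintype k] [DecidableEq n]

lemma eq_mul_transpose_mul_of_range_le {R : Type*} [CommRing R] {X : Matrix m n R}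
    (hX : Xᵀ * X = 1) {T : Matrix m k R}
    (h : LinearMap.range T.mulVecLin ≤ LinearMap.range X.mulVecLin) : T = X * (Xᵀ * T) := by
  refine ext_iff_mulVec.mpr fun v => ?_
  obtain ⟨c, hc⟩ := h (LinearMap.mem_range_self T.mulVecLin v)
  rw [mulVecLin_apply, mulVecLin_apply] at hc
  rw [← mulVec_mulVec, ← mulVec_mulVec, ← hc, mulVec_mulVec c Xᵀ X, hX, one_mulVec]

lemma range_mulVecLin_mul_eq_of_range_eq {R : Type*} [CommRing R] {l o : Type*} [Fintype o]
    (S : Matrix l m R) {U : Matrix m k R} {A : Matrix m o R}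
    (h : LinearMap.range U.mulVecLin = LinearMap.range A.mulVecLin) :
    LinearMap.range (S * U).mulVecLin = LinearMap.range (S * A).mulVecLin := by
  rw [mulVecLin_mul, mulVecLin_mul, LinearMap.range_comp, LinearMap.range_comp, h]

variable {X : Matrix m n ℝ}

lemma mulVec_dotProduct_mulVec_self_of_orthonormal (hX : Xᵀ * X = 1) (c : n → ℝ) :
    (X *ᵥ c) ⬝ᵥ (X *ᵥ c) = c ⬝ᵥ c := by
  rw [mulVec_dotProduct_mulVec_self, hX, one_mulVec]

lemma gramBounds_mul_left_iff (hX : Xᵀ * X = 1) {α β : ℝ} {Y : Matrix n k ℝ} :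
    GramBounds α β (X * Y) ↔ GramBounds α β Y := by
  simp only [GramBounds, ← mulVec_mulVec, mulVec_dotProduct_mulVec_self_of_orthonormal hX]

lemma gramBounds_transpose_mul {l : Type*} [Fintype l] [DecidableEq l] {Y : Matrix m l ℝ}
    (hX : Xᵀ * X = 1) (hY : Yᵀ * Y = 1) : GramBounds 0 1 (Xᵀ * Y) := by
  intro x
  rw [← mulVec_mulVec, zero_mul]
  refine ⟨dotProduct_self_nonneg _, ?_⟩
  calc (Xᵀ *ᵥ (Y *ᵥ x)) ⬝ᵥ (Xᵀ *ᵥ (Y *ᵥ x)) ≤ 1 * ((Y *ᵥ x) ⬝ᵥ (Y *ᵥ x)) :=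
        transpose_mulVec_dotProduct_self_le zero_le_one
          (fun c => (mulVec_dotProduct_mulVec_self_of_orthonormal hX c).trans_le
            (one_mul (c ⬝ᵥ c)).ge) _
    _ = 1 * (x ⬝ᵥ x) := by rw [mulVec_dotProduct_mulVec_self_of_orthonormal hY]

end OrthonormalColumns

namespace IsHermitian

section Spectral

variable {n : Type*} [Fintype n] [DecidableEq n] {H : Matrix n n ℝ} (hH : H.IsHermitian)

noncomputable def spectralCoeffs : (n → ℝ) ≃ₗ[ℝ] (n → ℝ) :=
  UnitaryGroup.toLinearEquiv (star hH.eigenvectorUnitary)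

lemma spectralCoeffs_apply (x : n → ℝ) :
    hH.spectralCoeffs x = star (hH.eigenvectorUnitary : Matrix n n ℝ) *ᵥ x := rfl

lemma dotProduct_mulVec_eq_sum (x : n → ℝ) :
    x ⬝ᵥ (H *ᵥ x) = ∑ j, hH.eigenvalues j * hH.spectralCoeffs x j ^ 2 := by
  set W : Matrix n n ℝ := (hH.eigenvectorUnitary : Matrix n n ℝ)
  have hH' : H = W * diagonal hH.eigenvalues * Wᵀ := by
    conv_lhs => rw [hH.spectral_theorem, Unitary.conjStarAlgAut_apply]
    simp [W, star_eq_conjTranspose]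
  conv_lhs => rw [hH', ← mulVec_mulVec, ← mulVec_mulVec, dotProduct_mulVec x]
  rw [← mulVec_transpose, spectralCoeffs_apply, star_eq_conjTranspose,
    conjTranspose_eq_transpose_of_trivial]
  simp only [dotProduct, mulVec_diagonal]
  exact Finset.sum_congr rfl fun j _ => by ring

lemma dotProduct_self_eq_sum (x : n → ℝ) : x ⬝ᵥ x = ∑ j, hH.spectralCoeffs x j ^ 2 := by
  have hW : (star (hH.eigenvectorUnitary : Matrix n n ℝ))ᵀ *
      star (hH.eigenvectorUnitary : Matrix n n ℝ) = 1 := by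
    rw [← conjTranspose_eq_transpose_of_trivial, ← star_eq_conjTranspose, star_star]
    exact Unitary.mul_star_self_of_mem hH.eigenvectorUnitary.2
  rw [← mulVec_dotProduct_mulVec_self_of_orthonormal hW x, ← spectralCoeffs_apply]
  simp only [dotProduct, sq]

noncomputable def spectralSubspace (s : Finset n) : Submodule ℝ (n → ℝ) :=
  (⨅ j ∈ (↑s : Set n)ᶜ, LinearMap.ker (LinearMap.proj (R := ℝ) (φ := fun _ : n => ℝ) j)).comap
    (hH.spectralCoeffs : (n → ℝ) →ₗ[ℝ] n → ℝ)

lemma mem_spectralSubspace {s : Finset n} {x : n → ℝ} :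
    x ∈ hH.spectralSubspace s ↔ ∀ j ∉ s, hH.spectralCoeffs x j = 0 := by
  simp [spectralSubspace, mem_iInf]

lemma finrank_spectralSubspace (s : Finset n) :
    finrank ℝ (hH.spectralSubspace s) = s.card := by
  rw [spectralSubspace, comap_equiv_eq_map_symm, LinearEquiv.finrank_map_eq,
    (LinearMap.iInfKerProjEquiv ℝ (fun _ : n => ℝ) disjoint_compl_right
      (by simp)).finrank_eq, finrank_pi]
  simp

variable {hH} {s : Finset n} {x : n → ℝ}

lemma mul_dotProduct_self_le_of_mem {a : ℝ} (ha : ∀ j ∈ s, a ≤ hH.eigenvalues j)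
    (hx : x ∈ hH.spectralSubspace s) : a * (x ⬝ᵥ x) ≤ x ⬝ᵥ (H *ᵥ x) := by
  rw [dotProduct_mulVec_eq_sum hH, dotProduct_self_eq_sum hH, Finset.mul_sum]
  refine Finset.sum_le_sum fun j _ => ?_
  by_cases hj : j ∈ s
  · exact mul_le_mul_of_nonneg_right (ha j hj) (sq_nonneg _)
  · simp [(mem_spectralSubspace hH).mp hx j hj]

lemma dotProduct_mulVec_le_of_mem {b : ℝ} (hb : ∀ j ∈ s, hH.eigenvalues j ≤ b)
    (hx : x ∈ hH.spectralSubspace s) : x ⬝ᵥ (H *ᵥ x) ≤ b * (x ⬝ᵥ x) := by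
  rw [dotProduct_mulVec_eq_sum hH, dotProduct_self_eq_sum hH, Finset.mul_sum]
  refine Finset.sum_le_sum fun j _ => ?_
  by_cases hj : j ∈ s
  · exact mul_le_mul_of_nonneg_right (hb j hj) (sq_nonneg _)
  · simp [(mem_spectralSubspace hH).mp hx j hj]

end Spectral

section MinMax

variable {N : ℕ} {H : Matrix (Fin N) (Fin N) ℝ} (hH : H.IsHermitian)

noncomputable def eigenvaluesAsc (t : Fin N) : ℝ :=
  hH.eigenvalues (Tuple.sort hH.eigenvalues t)

lemma eigenvaluesAsc_monotone : Monotone hH.eigenvaluesAsc := Tuple.monotone_sort hH.eigenvalues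

lemma exists_finrank_eq_forall_eigenvaluesAsc_mul_le (t : Fin N) :
    ∃ V : Submodule ℝ (Fin N → ℝ), finrank ℝ V = N - t ∧
      ∀ x ∈ V, hH.eigenvaluesAsc t * (x ⬝ᵥ x) ≤ x ⬝ᵥ (H *ᵥ x) := by
  refine ⟨hH.spectralSubspace ((Finset.Ici t).map (Tuple.sort hH.eigenvalues).toEmbedding),
    ?_, fun x => mul_dotProduct_self_le_of_mem ?_⟩
  · rw [finrank_spectralSubspace, Finset.card_map, Fin.card_Ici]
  · exact Finset.forall_mem_map.mpr fun u hu =>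
      hH.eigenvaluesAsc_monotone (Finset.mem_Ici.mp hu)

lemma exists_finrank_eq_forall_le_eigenvaluesAsc_mul (t : Fin N) :
    ∃ U : Submodule ℝ (Fin N → ℝ), finrank ℝ U = t + 1 ∧
      ∀ x ∈ U, x ⬝ᵥ (H *ᵥ x) ≤ hH.eigenvaluesAsc t * (x ⬝ᵥ x) := by
  refine ⟨hH.spectralSubspace ((Finset.Iic t).map (Tuple.sort hH.eigenvalues).toEmbedding),
    ?_, fun x => dotProduct_mulVec_le_of_mem ?_⟩
  · rw [finrank_spectralSubspace, Finset.card_map, Fin.card_Iic]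
  · exact Finset.forall_mem_map.mpr fun u hu =>
      hH.eigenvaluesAsc_monotone (Finset.mem_Iic.mp hu)

variable {hH} {t : Fin N} {c : ℝ}

lemma le_eigenvaluesAsc {V : Submodule ℝ (Fin N → ℝ)} (hV : N ≤ finrank ℝ V + t)
    (hc : ∀ x ∈ V, c * (x ⬝ᵥ x) ≤ x ⬝ᵥ (H *ᵥ x)) : c ≤ hH.eigenvaluesAsc t := by
  obtain ⟨U, hU, hUH⟩ := hH.exists_finrank_eq_forall_le_eigenvaluesAsc_mul t
  obtain ⟨x, ⟨hxV, hxU⟩, hx0⟩ := exists_mem_inf_ne_zero_of_finrank_lt_add (U := V) (W := U)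
    (by rw [finrank_fin_fun, hU]; omega)
  exact le_of_mul_le_mul_right ((hc x hxV).trans (hUH x hxU)) (dotProduct_self_pos hx0)

lemma eigenvaluesAsc_le {U : Submodule ℝ (Fin N → ℝ)} (hU : t + 1 ≤ finrank ℝ U)
    (hc : ∀ x ∈ U, x ⬝ᵥ (H *ᵥ x) ≤ c * (x ⬝ᵥ x)) : hH.eigenvaluesAsc t ≤ c := by
  obtain ⟨V, hV, hVH⟩ := hH.exists_finrank_eq_forall_eigenvaluesAsc_mul_le t
  obtain ⟨x, ⟨hxU, hxV⟩, hx0⟩ := exists_mem_inf_ne_zero_of_finrank_lt_add (U := U) (W := V)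
    (by rw [finrank_fin_fun, hV]; omega)
  exact le_of_mul_le_mul_right ((hVH x hxV).trans (hc x hxU)) (dotProduct_self_pos hx0)

end MinMax

section Congruence

variable {N : ℕ} {H₁ H₂ R : Matrix (Fin N) (Fin N) ℝ} (h₁ : H₁.IsHermitian)
  (h₂ : H₂.IsHermitian) {α β γ : ℝ} {t : Fin N}

lemma eigenvaluesAsc_le_mul_eigenvaluesAsc (hR : GramBounds α β R) (hα : 0 < α) (hγ : 0 ≤ γ)
    (ht : 0 ≤ h₂.eigenvaluesAsc t)
    (h : ∀ x, x ⬝ᵥ (H₁ *ᵥ x) ≤ γ * ((R *ᵥ x) ⬝ᵥ (H₂ *ᵥ (R *ᵥ x)))) :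
    h₁.eigenvaluesAsc t ≤ γ * β * h₂.eigenvaluesAsc t := by
  obtain ⟨U, hU, hUH⟩ := h₂.exists_finrank_eq_forall_le_eigenvaluesAsc_mul t
  refine eigenvaluesAsc_le (U := U.comap R.mulVecLin) (hR.finrank_comap hα U ▸ hU.ge)
    fun x hx => ?_
  calc x ⬝ᵥ (H₁ *ᵥ x) ≤ γ * ((R *ᵥ x) ⬝ᵥ (H₂ *ᵥ (R *ᵥ x))) := h x
    _ ≤ γ * (h₂.eigenvaluesAsc t * ((R *ᵥ x) ⬝ᵥ (R *ᵥ x))) := by gcongr; exact hUH _ hx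
    _ ≤ γ * (h₂.eigenvaluesAsc t * (β * (x ⬝ᵥ x))) := by gcongr; exact (hR x).2
    _ = γ * β * h₂.eigenvaluesAsc t * (x ⬝ᵥ x) := by ring

lemma mul_eigenvaluesAsc_le_eigenvaluesAsc (hR : GramBounds α β R) (hα : 0 < α) (hγ : 0 ≤ γ)
    (ht : 0 ≤ h₂.eigenvaluesAsc t)
    (h : ∀ x, γ * ((R *ᵥ x) ⬝ᵥ (H₂ *ᵥ (R *ᵥ x))) ≤ x ⬝ᵥ (H₁ *ᵥ x)) :
    γ * α * h₂.eigenvaluesAsc t ≤ h₁.eigenvaluesAsc t := by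
  obtain ⟨V, hV, hVH⟩ := h₂.exists_finrank_eq_forall_eigenvaluesAsc_mul_le t
  refine le_eigenvaluesAsc (V := V.comap R.mulVecLin) (by rw [hR.finrank_comap hα, hV]; omega)
    fun x hx => ?_
  calc γ * α * h₂.eigenvaluesAsc t * (x ⬝ᵥ x)
      = γ * (h₂.eigenvaluesAsc t * (α * (x ⬝ᵥ x))) := by ring
    _ ≤ γ * (h₂.eigenvaluesAsc t * ((R *ᵥ x) ⬝ᵥ (R *ᵥ x))) := by gcongr; exact (hR x).1
    _ ≤ γ * ((R *ᵥ x) ⬝ᵥ (H₂ *ᵥ (R *ᵥ x))) := by gcongr; exact hVH _ hx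
    _ ≤ x ⬝ᵥ (H₁ *ᵥ x) := h x

end Congruence

end IsHermitian

end Matrix

section SingularValues

variable {p q : ℕ} {α β : ℝ}

lemma svals_eq_sqrt_eigenvaluesAsc (X : Matrix (Fin p) (Fin q) ℝ) (i : Fin q) :
    svals X i = √((isHermitian_transpose_mul_self X).eigenvaluesAsc i.rev) := rfl

lemma eigenvaluesAsc_transpose_mul_self_nonneg (X : Matrix (Fin p) (Fin q) ℝ) (t : Fin q) :
    0 ≤ (isHermitian_transpose_mul_self X).eigenvaluesAsc t :=
  eigenvalues_conjTranspose_mul_self_nonneg X _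

lemma gramBounds_of_svals {X : Matrix (Fin p) (Fin q) ℝ} (hβ : 0 ≤ β)
    (h : ∀ i, √α ≤ svals X i ∧ svals X i ≤ √β) : GramBounds α β X := by
  set hX := isHermitian_transpose_mul_self X
  have hev : ∀ j, α ≤ hX.eigenvalues j ∧ hX.eigenvalues j ≤ β := by
    intro j
    have hj := h ((Tuple.sort hX.eigenvalues).symm j).rev
    rw [svals_eq_sqrt_eigenvaluesAsc, Fin.rev_rev, IsHermitian.eigenvaluesAsc,
      Equiv.apply_symm_apply] at hj
    have h0 : 0 ≤ hX.eigenvalues j := eigenvalues_conjTranspose_mul_self_nonneg X j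
    exact ⟨(Real.sqrt_le_sqrt_iff h0).mp hj.1, (Real.sqrt_le_sqrt_iff hβ).mp hj.2⟩
  intro x
  have hx : x ∈ hX.spectralSubspace Finset.univ := (hX.mem_spectralSubspace).mpr (by simp)
  rw [mulVec_dotProduct_mulVec_self]
  exact ⟨IsHermitian.mul_dotProduct_self_le_of_mem (fun j _ => (hev j).1) hx,
    IsHermitian.dotProduct_mulVec_le_of_mem (fun j _ => (hev j).2) hx⟩

lemma Matrix.GramBounds.svals_le {X : Matrix (Fin p) (Fin q) ℝ} (hX : GramBounds α β X)
    (i : Fin q) : svals X i ≤ √β :=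
  Real.sqrt_le_sqrt <| IsHermitian.eigenvaluesAsc_le (U := ⊤) (by simpa using i.rev.isLt)
    fun x _ => by rw [← mulVec_dotProduct_mulVec_self]; exact (hX x).2

lemma svals_transpose_mul_mul_mem {P : Matrix (Fin p) (Fin p) ℝ}
    {Q : Matrix (Fin q) (Fin q) ℝ} (hP : GramBounds α β P) (hQ : GramBounds α β Q) (hα : 0 < α)
    (M : Matrix (Fin p) (Fin q) ℝ) (i : Fin q) :
    svals (Pᵀ * M * Q) i ∈ Set.Icc (α * svals M i) (β * svals M i) := by
  have : Nonempty (Fin q) := ⟨i⟩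
  have hβ : 0 ≤ β := hα.le.trans hQ.le
  have hPt := hP.transpose hα hβ
  set C := Pᵀ * M * Q
  have hC : ∀ x, C *ᵥ x = Pᵀ *ᵥ (M *ᵥ (Q *ᵥ x)) := by
    simp [C, mulVec_mulVec, Matrix.mul_assoc]
  have hM := eigenvaluesAsc_transpose_mul_self_nonneg M i.rev
  have hlo := IsHermitian.mul_eigenvaluesAsc_le_eigenvaluesAsc
    (isHermitian_transpose_mul_self C) (isHermitian_transpose_mul_self M) hQ hα hα.le hM
    fun x => by
      rw [← mulVec_dotProduct_mulVec_self, ← mulVec_dotProduct_mulVec_self, hC]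
      exact (hPt _).1
  have hhi := IsHermitian.eigenvaluesAsc_le_mul_eigenvaluesAsc
    (isHermitian_transpose_mul_self C) (isHermitian_transpose_mul_self M) hQ hα hβ hM
    fun x => by
      rw [← mulVec_dotProduct_mulVec_self, ← mulVec_dotProduct_mulVec_self, hC]
      exact (hPt _).2
  rw [svals_eq_sqrt_eigenvaluesAsc, svals_eq_sqrt_eigenvaluesAsc]
  constructor
  · calc α * √(_) = √(α * α * _) := by
          rw [Real.sqrt_mul (mul_self_nonneg α), Real.sqrt_mul_self hα.le]
      _ ≤ _ := Real.sqrt_le_sqrt hlo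
  · calc √(_) ≤ √(β * β * _) := Real.sqrt_le_sqrt hhi
      _ = β * √(_) := by rw [Real.sqrt_mul (mul_self_nonneg β), Real.sqrt_mul_self hβ]

end SingularValues

theorem stmt14_general {m n ℓ r p q : ℕ}
    (A : Matrix (Fin m) (Fin n) ℝ) (B : Matrix (Fin m) (Fin ℓ) ℝ)
    (S : Matrix (Fin r) (Fin m) ℝ)
    (UA : Matrix (Fin m) (Fin p) ℝ)
    (hrUA : LinearMap.range UA.mulVecLin = LinearMap.range A.mulVecLin)
    (UB : Matrix (Fin m) (Fin q) ℝ)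
    (hrUB : LinearMap.range UB.mulVecLin = LinearMap.range B.mulVecLin)
    (USA : Matrix (Fin r) (Fin p) ℝ) (hUSA : USAᵀ * USA = 1)
    (hrUSA : LinearMap.range USA.mulVecLin = LinearMap.range (S * A).mulVecLin)
    (USB : Matrix (Fin r) (Fin q) ℝ) (hUSB : USBᵀ * USB = 1)
    (hrUSB : LinearMap.range USB.mulVecLin = LinearMap.range (S * B).mulVecLin)
    (ε : ℝ) (hε0 : 0 < ε) (hε1 : ε < 1 / 2)
    (hsvA : ∀ i, Real.sqrt (1 - ε) ≤ svals (S * UA) i ∧ svals (S * UA) i ≤ Real.sqrt (1 + ε))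
    (hsvB : ∀ i, Real.sqrt (1 - ε) ≤ svals (S * UB) i ∧ svals (S * UB) i ≤ Real.sqrt (1 + ε))
    (i : Fin q) :
    |svals (UAᵀ * Sᵀ * S * UB) i - svals (USAᵀ * USB) i| ≤ 2 * ε * (1 + ε) := by
  set RA := USAᵀ * (S * UA)
  set RB := USBᵀ * (S * UB)
  have hSUA : S * UA = USA * RA := eq_mul_transpose_mul_of_range_le hUSA
    (range_mulVecLin_mul_eq_of_range_eq S hrUA ▸ hrUSA ▸ le_rfl)
  have hSUB : S * UB = USB * RB := eq_mul_transpose_mul_of_range_le hUSB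
    (range_mulVecLin_mul_eq_of_range_eq S hrUB ▸ hrUSB ▸ le_rfl)
  have hRA : GramBounds (1 - ε) (1 + ε) RA :=
    (gramBounds_mul_left_iff hUSA).mp (hSUA ▸ gramBounds_of_svals (by linarith) hsvA)
  have hRB : GramBounds (1 - ε) (1 + ε) RB :=
    (gramBounds_mul_left_iff hUSB).mp (hSUB ▸ gramBounds_of_svals (by linarith) hsvB)
  have hfactor : UAᵀ * Sᵀ * S * UB = RAᵀ * (USAᵀ * USB) * RB := by
    calc UAᵀ * Sᵀ * S * UB = (S * UA)ᵀ * (S * UB) := by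
          simp [transpose_mul, Matrix.mul_assoc]
      _ = (USA * RA)ᵀ * (USB * RB) := by rw [← hSUA, ← hSUB]
      _ = RAᵀ * (USAᵀ * USB) * RB := by simp [transpose_mul, Matrix.mul_assoc]
  have hM : svals (USAᵀ * USB) i ≤ 1 := by
    simpa using (gramBounds_transpose_mul hUSA hUSB).svals_le i
  obtain ⟨hlo, hhi⟩ := svals_transpose_mul_mul_mem hRA hRB (by linarith) (USAᵀ * USB) i
  have hM0 : 0 ≤ svals (USAᵀ * USB) i := Real.sqrt_nonneg _
  rw [hfactor, abs_le]
  constructor <;> nlinarith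

theorem stmt14 {m n ℓ r p q : ℕ}
    (A : Matrix (Fin m) (Fin n) ℝ) (B : Matrix (Fin m) (Fin ℓ) ℝ)
    (S : Matrix (Fin r) (Fin m) ℝ)
    (hrSA : (S * A).rank = p) (hrA : A.rank = p)
    (hrSB : (S * B).rank = q) (hrB : B.rank = q)
    (UA : Matrix (Fin m) (Fin p) ℝ) (hUA : UAᵀ * UA = 1)
    (hrUA : LinearMap.range UA.mulVecLin = LinearMap.range A.mulVecLin)
    (UB : Matrix (Fin m) (Fin q) ℝ) (hUB : UBᵀ * UB = 1)
    (hrUB : LinearMap.range UB.mulVecLin = LinearMap.range B.mulVecLin)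
    (USA : Matrix (Fin r) (Fin p) ℝ) (hUSA : USAᵀ * USA = 1)
    (hrUSA : LinearMap.range USA.mulVecLin = LinearMap.range (S * A).mulVecLin)
    (USB : Matrix (Fin r) (Fin q) ℝ) (hUSB : USBᵀ * USB = 1)
    (hrUSB : LinearMap.range USB.mulVecLin = LinearMap.range (S * B).mulVecLin)
    (ε : ℝ) (hε0 : 0 < ε) (hε1 : ε < 1 / 2)
    (hsvA : ∀ i, Real.sqrt (1 - ε) ≤ svals (S * UA) i ∧ svals (S * UA) i ≤ Real.sqrt (1 + ε))
    (hsvB : ∀ i, Real.sqrt (1 - ε) ≤ svals (S * UB) i ∧ svals (S * UB) i ≤ Real.sqrt (1 + ε))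
    (i : Fin q) (hi : (i : ℕ) < min n ℓ) :
    |svals (UAᵀ * Sᵀ * S * UB) i - svals (USAᵀ * USB) i| ≤ 2 * ε * (1 + ε) :=
  stmt14_general A B S UA hrUA UB hrUB USA hUSA hrUSA USB hUSB hrUSB ε hε0 hε1 hsvA hsvB i
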